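/- arXiv:1607.06393 — 5 statements merged into one kernel-verified Lean document; each statement's English description precedes it below -/
import Mathlib

section
/- For every real number c with 0 < c < 1, every integer r ≥ 2, and every real a with 0 < a ≤ c^(3·2^(r−2) − 1), the following holds. Let G be a simple graph on n vertices with independence number α(G) ≤ a·n, and let φ be an r-edge-coloring of G with colors {1,…,r}. Then there exists a partition V(G) = C_1 ∪ … ∪ C_r into r (possibly empty) pairwise disjoint sets such that for every i with 1 ≤ i ≤ r, the graph on vertex set C_i whose edges are those edges of G inside C_i that receive color i under φ has independence number at most c·n. -/
open Finset

/-- `α(G) ≤ b`: every independent set of `G` has size at most `b`. -/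
def indepLE {n : ℕ} (G : SimpleGraph (Fin n)) (b : ℝ) : Prop :=
  ∀ S : Finset (Fin n), (∀ u ∈ S, ∀ v ∈ S, u ≠ v → ¬ G.Adj u v) → (S.card : ℝ) ≤ b

/-- `(G, φ)` contains a monochromatic `K_k`. -/
def HasMonoClique {n r : ℕ} (G : SimpleGraph (Fin n)) (φ : G.edgeSet → Fin r) (k : ℕ) : Prop :=
  ∃ (S : Finset (Fin n)) (c : Fin r), S.card = k ∧
    ∀ u ∈ S, ∀ v ∈ S, u ≠ v → ∃ h : G.Adj u v, φ ⟨s(u, v), h⟩ = c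

/-- Number of `r`-edge-colorings of `G` with no monochromatic `K_k`. -/
noncomputable def numColorings {n : ℕ} (G : SimpleGraph (Fin n)) (r k : ℕ) : ℕ :=
  Nat.card {φ : G.edgeSet → Fin r // ¬ HasMonoClique G φ k}

/-- `k_s(G)`: the number of copies of `K_s` in `G`. -/
noncomputable def cliqueCount {n : ℕ} (G : SimpleGraph (Fin n)) (s : ℕ) : ℕ :=
  Nat.card {S : Finset (Fin n) // G.IsNClique s S}

/-- `b_k` from Ramsey–Turán theory. -/
noncomputable def bconst (k : ℕ) : ℝ :=
  if Odd k then ((k : ℝ) - 3) / (2 * ((k : ℝ) - 1))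
  else (3 * (k : ℝ) - 10) / (2 * (3 * (k : ℝ) - 4))

/-- `a_ℓ` in the even case: maximum over `x ∈ [0,1]`. -/
noncomputable def aEven (ℓ : ℕ) : ℝ :=
  sSup ((fun x : ℝ =>
    ((ℓ - 2).choose 3 : ℝ) * ((1 - x) / ((ℓ : ℝ) - 2)) ^ 3 +
    x * ((ℓ - 2).choose 2 : ℝ) * ((1 - x) / ((ℓ : ℝ) - 2)) ^ 2 +
    (1 / 2) * (x / 2) ^ 2 * (1 - x)) '' Set.Icc (0 : ℝ) 1)

/-!
Induction on the number of colours, under the weaker hypothesis `α(G) ≤ c ^ r * n`. For a colour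
set `P = {a} ∪ Q`, repeatedly remove a block `B` of vertices that is independent in all colours of
`Q` and has more than `c ^ #Q * n` vertices, and give all these blocks colour `a`. An independent
set of colour `a` meets each block in a set that is independent in all colours of `P`, hence in at
most `c ^ #P * n < c * #B` vertices. Once no such block is left, the remaining vertices satisfy the
hypothesis for `Q` and are coloured by induction.
-/

namespace SimpleGraph

variable {V ι : Type*}

theorem isIndepSet_sup_iff {G H : SimpleGraph V} {s : Set V} :
    (G ⊔ H).IsIndepSet s ↔ G.IsIndepSet s ∧ H.IsIndepSet s := by
  simp only [isIndepSet_iff, sup_adj, not_or]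
  exact ⟨fun h => ⟨h.mono' fun _ _ => And.left, h.mono' fun _ _ => And.right⟩,
    fun ⟨hG, hH⟩ _ hx _ hy hxy => ⟨hG hx hy hxy, hH hx hy hxy⟩⟩

theorem IsIndepSet.anti {G H : SimpleGraph V} {s : Set V} (hGH : G ≤ H) (h : H.IsIndepSet s) :
    G.IsIndepSet s :=
  h.mono' fun _ _ hne hadj => hne (hGH hadj)

def colorClassGraph (G : SimpleGraph V) (φ : G.edgeSet → ι) (i : ι) : SimpleGraph V where
  Adj u v := ∃ h : G.Adj u v, φ ⟨s(u, v), h⟩ = i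
  symm := ⟨fun _ _ ⟨h, hi⟩ => ⟨h.symm, by simpa only [Sym2.eq_swap] using hi⟩⟩
  loopless := ⟨fun _ ⟨h, _⟩ => G.irrefl h⟩

theorem le_iSup_colorClassGraph (G : SimpleGraph V) (φ : G.edgeSet → ι) :
    G ≤ ⨆ i, G.colorClassGraph φ i :=
  fun _ _ h => iSup_adj.mpr ⟨_, h, rfl⟩

variable [DecidableEq V]

theorem exists_subset_isIndepSet_card_le (G H : SimpleGraph V) {c s : ℝ} (hc : 0 < c)
    (U : Finset V) (hU : ∀ S ⊆ U, (G ⊔ H).IsIndepSet (S : Set V) → (#S : ℝ) ≤ c * s) :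
    ∃ A ⊆ U, (∀ S ⊆ U \ A, H.IsIndepSet (S : Set V) → (#S : ℝ) ≤ s) ∧
      ∀ S ⊆ A, G.IsIndepSet (S : Set V) → (#S : ℝ) ≤ c * #A := by
  induction U using Finset.strongInduction with
  | H U ih =>
  by_cases hsmall : ∀ S ⊆ U, H.IsIndepSet (S : Set V) → (#S : ℝ) ≤ s
  · refine ⟨∅, empty_subset U, by simpa using hsmall, fun S hS _ => ?_⟩
    simp [subset_empty.mp hS]
  push Not at hsmall
  obtain ⟨B, hBU, hBindep, hBlarge⟩ := hsmall
  have hBne : B.Nonempty := by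
    rw [nonempty_iff_ne_empty]
    rintro rfl
    have := hU ∅ (empty_subset U) (by simp)
    simp only [card_empty, CharP.cast_eq_zero] at hBlarge this
    nlinarith
  obtain ⟨A, hAU, hrest, hA⟩ := ih (U \ B) (sdiff_ssubset hBU hBne)
    fun S hS => hU S (hS.trans sdiff_subset)
  have hAB : Disjoint A B := disjoint_of_subset_left hAU sdiff_disjoint
  refine ⟨A ∪ B, union_subset (hAU.trans sdiff_subset) hBU, ?_, ?_⟩
  · intro S hS
    exact hrest S (by rwa [sdiff_sdiff_left, sup_eq_union, union_comm])
  · intro S hS hSindep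
    have hSB : (#(S ∩ B) : ℝ) ≤ c * #B := by
      have hindep : (G ⊔ H).IsIndepSet (↑(S ∩ B) : Set V) := by
        rw [isIndepSet_sup_iff, coe_inter]
        exact ⟨hSindep.mono Set.inter_subset_left, hBindep.mono Set.inter_subset_right⟩
      have := hU _ (inter_subset_right.trans hBU) hindep
      nlinarith
    have hSA : (#(S \ B) : ℝ) ≤ c * #A := by
      refine hA _ (fun v hv => ?_) (hSindep.mono (by simp))
      rw [mem_sdiff] at hv
      exact (mem_union.mp (hS hv.1)).resolve_right hv.2
    rw [← card_inter_add_card_sdiff S B, card_union_of_disjoint hAB]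
    push_cast
    linarith

theorem exists_partition_isIndepSet_card_le [DecidableEq ι] (H : ι → SimpleGraph V) {c N : ℝ}
    (hc : 0 < c) {P : Finset ι} (hP : P.Nonempty) (U : Finset V) (hUN : (#U : ℝ) ≤ N)
    (hU : ∀ S ⊆ U, (⨆ i ∈ P, H i).IsIndepSet (S : Set V) → (#S : ℝ) ≤ c ^ #P * N) :
    ∃ f : V → ι, (∀ v ∈ U, f v ∈ P) ∧
      ∀ i, ∀ S ⊆ U.filter (f · = i), (H i).IsIndepSet (S : Set V) → (#S : ℝ) ≤ c * N := by
  have hN : 0 ≤ N := (Nat.cast_nonneg _).trans hUN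
  induction hP using Finset.Nonempty.cons_induction generalizing U with
  | singleton a =>
    refine ⟨fun _ => a, fun _ _ => mem_singleton_self a, fun i S hS hSindep => ?_⟩
    obtain rfl | hia := eq_or_ne a i
    · simpa using hU S (hS.trans (filter_subset _ U)) (by simpa using hSindep)
    · rw [filter_false_of_mem fun _ _ => hia, subset_empty] at hS
      simpa [hS] using mul_nonneg hc.le hN
  | cons a Q haQ hQ ih =>
    rw [cons_eq_insert, Finset.iSup_insert, card_insert_of_notMem haQ, pow_succ', mul_assoc] at hU
    obtain ⟨A, hAU, hrest, hA⟩ := exists_subset_isIndepSet_card_le _ _ hc U hU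
    obtain ⟨f, hfQ, hf⟩ :=
      ih (U \ A) ((Nat.cast_le.mpr (card_le_card sdiff_subset)).trans hUN) hrest
    refine ⟨fun v => if v ∈ A then a else f v, fun v hv => ?_, fun i S hS hSindep => ?_⟩
    · by_cases hvA : v ∈ A
      · simp [hvA]
      · simp [hvA, hfQ v (mem_sdiff.mpr ⟨hv, hvA⟩)]
    have hS' : ∀ v ∈ S, v ∈ U ∧ (if v ∈ A then a else f v) = i :=
      fun v hv => mem_filter.mp (hS hv)
    obtain rfl | hai := eq_or_ne a i
    · have hSA : S ⊆ A := fun v hv => by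
        by_contra hvA
        have hfv := (hS' v hv).2
        rw [if_neg hvA] at hfv
        exact haQ (hfv ▸ hfQ v (mem_sdiff.mpr ⟨(hS' v hv).1, hvA⟩))
      calc (#S : ℝ) ≤ c * #A := hA S hSA hSindep
        _ ≤ c * #U := by gcongr
        _ ≤ c * N := by gcongr
    · refine hf i S (fun v hv => ?_) hSindep
      obtain ⟨hvU, hfv⟩ := hS' v hv
      by_cases hvA : v ∈ A
      · exact absurd (by simpa [hvA] using hfv) hai
      · rw [if_neg hvA] at hfv
        exact mem_filter.mpr ⟨mem_sdiff.mpr ⟨hvU, hvA⟩, hfv⟩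

end SimpleGraph

theorem statement_0_general (c : ℝ) (hc0 : 0 < c) (hc1 : c < 1) (r : ℕ) (hr : 2 ≤ r)
    (a : ℝ) (ha : a ≤ c ^ (3 * 2 ^ (r - 2) - 1))
    (n : ℕ) (G : SimpleGraph (Fin n)) (hα : indepLE G (a * n))
    (φ : G.edgeSet → Fin r) :
    ∃ C : Fin r → Finset (Fin n),
      (∀ v : Fin n, ∃! i : Fin r, v ∈ C i) ∧
      ∀ i : Fin r, ∀ S : Finset (Fin n), (∀ v ∈ S, v ∈ C i) →
        (∀ u ∈ S, ∀ v ∈ S, u ≠ v → ¬ ∃ h : G.Adj u v, φ ⟨s(u, v), h⟩ = i) →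
        (S.card : ℝ) ≤ c * n := by
  have : NeZero r := ⟨by omega⟩
  have hac : a ≤ c ^ #(univ : Finset (Fin r)) := by
    refine ha.trans (pow_le_pow_of_le_one hc0.le hc1.le ?_)
    have : r - 2 < 2 ^ (r - 2) := Nat.lt_two_pow_self
    simp only [card_univ, Fintype.card_fin]
    omega
  have hle : G ≤ ⨆ i ∈ univ, G.colorClassGraph φ i := by
    simpa using G.le_iSup_colorClassGraph φ
  obtain ⟨f, -, hf⟩ := SimpleGraph.exists_partition_isIndepSet_card_le (G.colorClassGraph φ)
    (N := n) hc0 univ_nonempty univ (by simp)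
    fun S _ hS => (hα S (hS.anti hle)).trans (by gcongr)
  refine ⟨fun i => univ.filter (f · = i),
    fun v => ⟨f v, by simp, fun i hi => (mem_filter.mp hi).2.symm⟩, ?_⟩
  exact fun i S hSC hS => hf i S hSC fun u hu v hv huv => hS u hu v hv huv

theorem statement_0 (c : ℝ) (hc0 : 0 < c) (hc1 : c < 1) (r : ℕ) (hr : 2 ≤ r)
    (a : ℝ) (ha0 : 0 < a) (ha : a ≤ c ^ (3 * 2 ^ (r - 2) - 1))
    (n : ℕ) (G : SimpleGraph (Fin n)) (hα : indepLE G (a * n))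
    (φ : G.edgeSet → Fin r) :
    ∃ C : Fin r → Finset (Fin n),
      (∀ v : Fin n, ∃! i : Fin r, v ∈ C i) ∧
      ∀ i : Fin r, ∀ S : Finset (Fin n), (∀ v ∈ S, v ∈ C i) →
        (∀ u ∈ S, ∀ v ∈ S, u ≠ v → ¬ ∃ h : G.Adj u v, φ ⟨s(u, v), h⟩ = i) →
        (S.card : ℝ) ≤ c * n :=
  statement_0_general c hc0 hc1 r hr a ha n G hα φ
end

section
/- For every ε > 0 there exist γ > 0 and n_0 such that for every n ≥ n_0 and every simple graph G on n vertices with independence number α(G) ≤ γ·n, the number of 2-edge-colorings of G containing no monochromatic K_3 is at most 2^(ε·n²). -/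
open Finset

/-!
In a 2-colouring without monochromatic triangles, the red neighbourhood of `u` and the blue
neighbourhood of `v` span no edge of `G` (a red edge would close a red triangle at `u`, a blue one a
blue triangle at `v`), so they meet in an independent set. Double counting gives
`∑_w d_red(w) d_blue(w) ≤ n² α(G) ≤ γ n³`, and by Cauchy–Schwarz the ordered pairs `(u, v)` such
that `uv` has the minority colour at `u` number at most `√γ n²`. A colouring is determined by its
majority colour at every vertex together with this set of pairs. With `x = 2^(-K)` and `γ = x⁴`,
the number of sets of at most `m ≤ x² n²` pairs is at most `(1 + x)^(n²) / x^m ≤ e^(2 x n²)`, since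
`K x ≤ 1`. Hence there are at most `2ⁿ e^(2 x n²)` colourings, which is `2^(ε n²)` once `x < ε / 8`
and `n ≥ 4 / ε`.
-/

section ColorClasses

variable {n r : ℕ} (G : SimpleGraph (Fin n)) (φ : G.edgeSet → Fin r)

def colorClass (c : Fin r) : SimpleGraph (Fin n) :=
  SimpleGraph.fromEdgeSet {e | ∃ h : e ∈ G.edgeSet, φ ⟨e, h⟩ = c}

variable {G φ}

theorem colorClass_adj {c : Fin r} {u v : Fin n} :
    (colorClass G φ c).Adj u v ↔ ∃ h : G.Adj u v, φ ⟨s(u, v), h⟩ = c := by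
  simp only [colorClass, SimpleGraph.fromEdgeSet_adj, Set.mem_ofPred_eq]
  exact ⟨fun ⟨h, _⟩ => h, fun h => ⟨h, h.1.ne⟩⟩

theorem colorClass_adj_self {u v : Fin n} (h : G.Adj u v) :
    (colorClass G φ (φ ⟨s(u, v), h⟩)).Adj u v :=
  colorClass_adj.2 ⟨h, rfl⟩

theorem hasMonoClique_of_isNClique {c : Fin r} {k : ℕ} {S : Finset (Fin n)}
    (hS : (colorClass G φ c).IsNClique k S) : HasMonoClique G φ k :=
  ⟨S, c, hS.card_eq, fun _ hu _ hv huv => colorClass_adj.1 (hS.isClique hu hv huv)⟩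

variable (G φ) in
open Classical in
noncomputable def colorNbr (c : Fin r) (u : Fin n) : Finset (Fin n) :=
  univ.filter ((colorClass G φ c).Adj u)

theorem mem_colorNbr {c : Fin r} {u v : Fin n} :
    v ∈ colorNbr G φ c u ↔ (colorClass G φ c).Adj u v := by
  simp [colorNbr]

theorem not_adj_of_mem_colorNbr (hφ : ¬ HasMonoClique G φ 3) {c : Fin r} {u x y : Fin n}
    (hx : x ∈ colorNbr G φ c u) (hy : y ∈ colorNbr G φ c u) : ¬ (colorClass G φ c).Adj x y :=
  fun hxy => hφ <| hasMonoClique_of_isNClique <|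
    SimpleGraph.is3Clique_triple_iff.2 ⟨mem_colorNbr.1 hx, mem_colorNbr.1 hy, hxy⟩

end ColorClasses

theorem sum_card_mul_card_eq_sum_sum_card_inter {α : Type*} [Fintype α] [DecidableEq α]
    (A B : α → Finset α) (hA : ∀ u w, u ∈ A w ↔ w ∈ A u) (hB : ∀ v w, v ∈ B w ↔ w ∈ B v) :
    ∑ w, #(A w) * #(B w) = ∑ u, ∑ v, #(A u ∩ B v) := by
  have hcard (s : Finset α) : #s = ∑ u, if u ∈ s then 1 else 0 := by simp
  calc ∑ w, #(A w) * #(B w)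
      = ∑ w, ∑ u, ∑ v, if u ∈ A w ∧ v ∈ B w then 1 else 0 := by
        refine Finset.sum_congr rfl fun w _ => ?_
        rw [hcard (A w), hcard (B w), Finset.sum_mul_sum]
        simp only [ite_zero_mul_ite_zero, mul_one]
    _ = ∑ u, ∑ v, ∑ w, if u ∈ A w ∧ v ∈ B w then 1 else 0 := by
        rw [Finset.sum_comm]
        exact Finset.sum_congr rfl fun _ _ => Finset.sum_comm
    _ = ∑ u, ∑ v, #(A u ∩ B v) := by
        simp [hA, hB, Finset.filter_and]

section TwoColorings

variable {n : ℕ} {G : SimpleGraph (Fin n)} {φ : G.edgeSet → Fin 2}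

theorem not_adj_of_mem_colorNbr_zero_inter_one (hφ : ¬ HasMonoClique G φ 3) (u v : Fin n) :
    ∀ x ∈ colorNbr G φ 0 u ∩ colorNbr G φ 1 v, ∀ y ∈ colorNbr G φ 0 u ∩ colorNbr G φ 1 v,
      x ≠ y → ¬ G.Adj x y := by
  intro x hx y hy _ hxy
  rw [mem_inter] at hx hy
  have hc := colorClass_adj_self (φ := φ) hxy
  obtain hc0 | hc1 : φ ⟨s(x, y), hxy⟩ = 0 ∨ φ ⟨s(x, y), hxy⟩ = 1 := by omega
  · exact not_adj_of_mem_colorNbr hφ hx.1 hy.1 (hc0 ▸ hc)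
  · exact not_adj_of_mem_colorNbr hφ hx.2 hy.2 (hc1 ▸ hc)

theorem sum_card_colorNbr_mul_le (hφ : ¬ HasMonoClique G φ 3) {b : ℝ} (hind : indepLE G b) :
    ∑ w, (#(colorNbr G φ 0 w) * #(colorNbr G φ 1 w) : ℝ) ≤ n ^ 2 * b := by
  have hsymm (c : Fin 2) (u w : Fin n) : u ∈ colorNbr G φ c w ↔ w ∈ colorNbr G φ c u := by
    simp only [mem_colorNbr, SimpleGraph.adj_comm]
  calc ∑ w, (#(colorNbr G φ 0 w) * #(colorNbr G φ 1 w) : ℝ)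
      = ∑ u, ∑ v, (#(colorNbr G φ 0 u ∩ colorNbr G φ 1 v) : ℝ) := by
        exact_mod_cast sum_card_mul_card_eq_sum_sum_card_inter _ _ (hsymm 0) (hsymm 1)
    _ ≤ ∑ _u : Fin n, ∑ _v : Fin n, b :=
        sum_le_sum fun u _ => sum_le_sum fun v _ =>
          hind _ (not_adj_of_mem_colorNbr_zero_inter_one hφ u v)
    _ = n ^ 2 * b := by simp [sq, mul_assoc]

variable (G φ)

noncomputable def majorityColor (u : Fin n) : Fin 2 :=
  if #(colorNbr G φ 1 u) ≤ #(colorNbr G φ 0 u) then 0 else 1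

noncomputable def minorityNbr (u : Fin n) : Finset (Fin n) :=
  colorNbr G φ (majorityColor G φ u + 1) u

noncomputable def minorityPairs : Finset (Fin n × Fin n) :=
  univ.filter fun p => p.2 ∈ minorityNbr G φ p.1

variable {G φ}

theorem card_minorityNbr_sq_le (u : Fin n) :
    #(minorityNbr G φ u) ^ 2 ≤ #(colorNbr G φ 0 u) * #(colorNbr G φ 1 u) := by
  unfold minorityNbr majorityColor
  split_ifs with h
  · simpa [sq] using Nat.mul_le_mul_right _ h
  · simpa [sq] using Nat.mul_le_mul_left _ (le_of_not_ge h)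

theorem card_minorityPairs : #(minorityPairs G φ) = ∑ u, #(minorityNbr G φ u) := by
  rw [minorityPairs, card_filter, Fintype.sum_prod_type]
  simp

theorem mem_minorityPairs {u v : Fin n} : (u, v) ∈ minorityPairs G φ ↔ v ∈ minorityNbr G φ u := by
  simp [minorityPairs]

theorem color_eq_ite {u v : Fin n} (h : G.Adj u v) :
    φ ⟨s(u, v), h⟩ =
      if v ∈ minorityNbr G φ u then majorityColor G φ u + 1 else majorityColor G φ u := by
  split_ifs with hv
  · exact (colorClass_adj.1 (mem_colorNbr.1 hv)).2
  · have hne : φ ⟨s(u, v), h⟩ ≠ majorityColor G φ u + 1 :=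
      fun he => hv (mem_colorNbr.2 (colorClass_adj.2 ⟨h, he⟩))
    omega

variable (G) in
theorem majorityColor_minorityPairs_injective :
    Function.Injective fun φ : G.edgeSet → Fin 2 => (majorityColor G φ, minorityPairs G φ) := by
  intro φ ψ hφψ
  obtain ⟨hmaj, hpairs⟩ := Prod.ext_iff.1 hφψ
  funext ⟨e, he⟩
  induction e using Sym2.inductionOn with
  | hf u v =>
    simp only at hmaj hpairs
    rw [color_eq_ite (φ := φ) he, color_eq_ite (φ := ψ) he]
    simp only [← mem_minorityPairs, hmaj, hpairs]

theorem card_minorityPairs_sq_le (hφ : ¬ HasMonoClique G φ 3) {b : ℝ} (hind : indepLE G b) :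
    (#(minorityPairs G φ) : ℝ) ^ 2 ≤ n ^ 3 * b := by
  calc (#(minorityPairs G φ) : ℝ) ^ 2
      = (∑ u, (#(minorityNbr G φ u) : ℝ)) ^ 2 := by rw [card_minorityPairs, Nat.cast_sum]
    _ ≤ n * ∑ u, (#(minorityNbr G φ u) : ℝ) ^ 2 := by
        simpa using sq_sum_le_card_mul_sum_sq (s := univ) (f := fun u => (#(minorityNbr G φ u) : ℝ))
    _ ≤ n * ∑ w, (#(colorNbr G φ 0 w) * #(colorNbr G φ 1 w) : ℝ) := by
        gcongr with u
        exact_mod_cast card_minorityNbr_sq_le u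
    _ ≤ n * (n ^ 2 * b) := by gcongr; exact sum_card_colorNbr_mul_le hφ hind
    _ = n ^ 3 * b := by ring

end TwoColorings

theorem numColorings_le_mul_card_filter_card_le {n : ℕ} (G : SimpleGraph (Fin n)) (m : ℕ)
    (hsmall : ∀ φ : G.edgeSet → Fin 2, ¬ HasMonoClique G φ 3 → #(minorityPairs G φ) ≤ m) :
    numColorings G 2 3 ≤ 2 ^ n * #(univ.filter fun M : Finset (Fin n × Fin n) => #M ≤ m) := by
  calc numColorings G 2 3
      ≤ Nat.card ((Fin n → Fin 2) × {M : Finset (Fin n × Fin n) // #M ≤ m}) :=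
        Nat.card_le_card_of_injective
          (fun φ => (majorityColor G φ.1, ⟨minorityPairs G φ.1, hsmall φ.1 φ.2⟩))
          fun φ ψ h => Subtype.ext <| majorityColor_minorityPairs_injective G <|
            Prod.ext (Prod.ext_iff.1 h).1 (congrArg Subtype.val (Prod.ext_iff.1 h).2)
    _ = 2 ^ n * #(univ.filter fun M : Finset (Fin n × Fin n) => #M ≤ m) := by
        simp [Nat.card_eq_fintype_card, Fintype.card_subtype]

theorem two_pow_le_exp (k : ℕ) : (2 : ℝ) ^ k ≤ Real.exp k := by
  calc (2 : ℝ) ^ k ≤ Real.exp 1 ^ k := by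
        gcongr
        linarith [Real.add_one_le_exp 1]
    _ = Real.exp k := Real.exp_one_pow k

theorem card_filter_card_le_mul_pow_le {α : Type*} [Fintype α] {x : ℝ} (hx0 : 0 ≤ x)
    (hx1 : x ≤ 1) (m : ℕ) :
    (#(univ.filter fun M : Finset α => #M ≤ m) : ℝ) * x ^ m ≤ (1 + x) ^ Fintype.card α := by
  calc (#(univ.filter fun M : Finset α => #M ≤ m) : ℝ) * x ^ m
      = ∑ M ∈ univ.filter fun M : Finset α => #M ≤ m, x ^ m := by
        rw [sum_const, nsmul_eq_mul]
    _ ≤ ∑ M ∈ univ.filter fun M : Finset α => #M ≤ m, x ^ #M :=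
        sum_le_sum fun M hM => pow_le_pow_of_le_one hx0 hx1 (mem_filter.1 hM).2
    _ ≤ ∑ M : Finset α, x ^ #M :=
        sum_le_sum_of_subset_of_nonneg (filter_subset _ _) fun _ _ _ => by positivity
    _ = (1 + x) ^ Fintype.card α := by
        simpa [add_comm] using Fintype.sum_pow_mul_eq_add_pow α x 1

theorem card_filter_card_le_le_exp {α : Type*} [Fintype α] (K m : ℕ)
    (hm : (m : ℝ) ≤ ((1 / 2 : ℝ) ^ K) ^ 2 * Fintype.card α) :
    (#(univ.filter fun M : Finset α => #M ≤ m) : ℝ)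
      ≤ Real.exp (2 * (1 / 2 : ℝ) ^ K * Fintype.card α) := by
  set x : ℝ := (1 / 2) ^ K
  set N := Fintype.card α
  have hx0 : 0 ≤ x := by positivity
  have hKx : (K : ℝ) * x ≤ 1 := by
    calc (K : ℝ) * x ≤ 2 ^ K * x := by gcongr; exact_mod_cast K.lt_two_pow_self.le
      _ = 1 := by rw [← mul_pow]; norm_num
  have hKm : (K * m : ℕ) ≤ x * N := by
    calc ((K * m : ℕ) : ℝ) ≤ K * (x ^ 2 * N) := by push_cast; gcongr
      _ = (K * x) * (x * N) := by ring
      _ ≤ x * N := mul_le_of_le_one_left (by positivity) hKx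
  calc (#(univ.filter fun M : Finset α => #M ≤ m) : ℝ)
      = #(univ.filter fun M : Finset α => #M ≤ m) * x ^ m * 2 ^ (K * m) := by
        rw [mul_assoc, pow_mul, ← mul_pow, ← mul_pow]
        norm_num [x]
    _ ≤ (1 + x) ^ N * 2 ^ (K * m) := by
        gcongr
        exact card_filter_card_le_mul_pow_le hx0 (pow_le_one₀ (by norm_num) (by norm_num)) m
    _ ≤ Real.exp x ^ N * Real.exp (K * m : ℕ) := by
        gcongr
        · linarith [Real.add_one_le_exp x]
        · exact two_pow_le_exp _
    _ ≤ Real.exp (x * N) * Real.exp (x * N) := by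
        rw [← Real.exp_nat_mul, mul_comm (N : ℝ)]
        gcongr
    _ = Real.exp (2 * x * N) := by rw [← Real.exp_add]; ring_nf

theorem numColorings_le_exp {n : ℕ} (G : SimpleGraph (Fin n)) (K : ℕ)
    (hind : indepLE G (((1 / 2 : ℝ) ^ K) ^ 4 * n)) :
    (numColorings G 2 3 : ℝ) ≤ Real.exp (n + 2 * (1 / 2 : ℝ) ^ K * n ^ 2) := by
  set x : ℝ := (1 / 2) ^ K
  set m := ⌊x ^ 2 * n ^ 2⌋₊
  have hsmall (φ : G.edgeSet → Fin 2) (hφ : ¬ HasMonoClique G φ 3) :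
      #(minorityPairs G φ) ≤ m := by
    refine Nat.le_floor ((pow_le_pow_iff_left₀ (by positivity) (by positivity) two_ne_zero).1 ?_)
    calc (#(minorityPairs G φ) : ℝ) ^ 2 ≤ n ^ 3 * (x ^ 4 * n) := card_minorityPairs_sq_le hφ hind
      _ = (x ^ 2 * n ^ 2) ^ 2 := by ring
  have hm : (m : ℝ) ≤ x ^ 2 * Fintype.card (Fin n × Fin n) := by
    rw [Fintype.card_prod, Fintype.card_fin, Nat.cast_mul, ← sq]
    exact Nat.floor_le (by positivity)
  calc (numColorings G 2 3 : ℝ)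
      ≤ 2 ^ n * #(univ.filter fun M : Finset (Fin n × Fin n) => #M ≤ m) := by
        exact_mod_cast numColorings_le_mul_card_filter_card_le G m hsmall
    _ ≤ Real.exp n * Real.exp (2 * x * Fintype.card (Fin n × Fin n)) := by
        gcongr
        · exact two_pow_le_exp n
        · exact card_filter_card_le_le_exp K m hm
    _ = Real.exp (n + 2 * x * n ^ 2) := by
        rw [← Real.exp_add]
        simp [sq]

theorem statement_1 (ε : ℝ) (hε : 0 < ε) :
    ∃ γ : ℝ, 0 < γ ∧ ∃ n0 : ℕ, ∀ n : ℕ, n0 ≤ n → ∀ G : SimpleGraph (Fin n),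
      indepLE G (γ * n) →
      (numColorings G 2 3 : ℝ) ≤ (2 : ℝ) ^ (ε * (n : ℝ) ^ 2) := by
  obtain ⟨K, hK⟩ : ∃ K : ℕ, (1 / 2 : ℝ) ^ K < ε / 8 :=
    exists_pow_lt_of_lt_one (by positivity) (by norm_num)
  refine ⟨((1 / 2 : ℝ) ^ K) ^ 4, by positivity, ⌈4 / ε⌉₊, fun n hn G hind => ?_⟩
  have hεn : 4 ≤ ε * n := by
    have := (Nat.ceil_le.1 hn)
    rwa [div_le_iff₀ hε, mul_comm] at this
  have hlog : 1 / 2 < Real.log 2 := by linarith [Real.log_two_gt_d9]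
  calc (numColorings G 2 3 : ℝ)
      ≤ Real.exp (n + 2 * (1 / 2 : ℝ) ^ K * n ^ 2) := numColorings_le_exp G K hind
    _ ≤ Real.exp (Real.log 2 * (ε * n ^ 2)) := by
        gcongr
        nlinarith [sq_nonneg (n : ℝ), mul_nonneg hε.le (sq_nonneg (n : ℝ))]
    _ = (2 : ℝ) ^ (ε * (n : ℝ) ^ 2) := (Real.rpow_def_of_pos two_pos _).symm
end

section
/- For every γ > 0 there exists n_0 such that for every n ≥ n_0 there exists a simple graph G on n vertices with independence number α(G) ≤ γ·n for which the number of 2-edge-colorings of G containing no monochromatic K_4 is at least 2^(⌊n²/4⌋). -/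
open Finset

/-!
Split the vertices into halves `A` and `Aᶜ` and let `G` be a triangle-free graph `H` with small
independence number plus all edges between `A` and `Aᶜ`. Independent sets of `G` are independent
in `H`. Colour the edges inside `A` with `0`, those inside `Aᶜ` with `1`, and the `⌊n²/4⌋` edges
across arbitrarily: a `K₄` of colour `0` has at most one vertex in `Aᶜ`, so three of its vertices
form a triangle of `H` inside `A`, and symmetrically for colour `1`.

The graph `H` comes from Erdős' deletion method. Let `ω : Sym2 V → Fin (l + 1)` be uniformly random
and join `u ≠ v` when `ω s(u, v) = 0`. For `t ≈ m / 4q` and `l ≈ t / 32q`, at most a quarter of all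
`ω` give an independent `t`-set, and by Markov's inequality at most a quarter give `t` or more
triangles. For any other `ω`, deleting every edge that lies in a triangle leaves a triangle-free
graph; an independent set of it, minus the vertices of the fewer than `t` triangles, was already
independent, so it has fewer than `t + 3t` vertices.
-/

theorem card_filter_forall_mem_mul_pow {ι α : Type*} [Fintype ι] [DecidableEq ι] [Fintype α]
    [DecidableEq α] (P : Finset ι) (B : Finset α) :
    #{ω : ι → α | ∀ i ∈ P, ω i ∈ B} * Fintype.card α ^ #P =
      #B ^ #P * Fintype.card α ^ Fintype.card ι := by
  have hpi : ({ω : ι → α | ∀ i ∈ P, ω i ∈ B} : Finset (ι → α)) =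
      Fintype.piFinset fun i => if i ∈ P then B else univ := by
    ext ω
    simp only [mem_filter, mem_univ, true_and, Fintype.mem_piFinset]
    refine ⟨fun h i => ?_, fun h i hi => by simpa [hi] using h i⟩
    split_ifs with hi
    exacts [h i hi, mem_univ _]
  simp only [hpi, Fintype.card_piFinset, apply_ite card, card_univ, prod_ite, prod_const,
    filter_mem_eq_inter, univ_inter, mul_assoc, ← pow_add]
  rw [filter_not, filter_mem_eq_inter, univ_inter, card_univ_sdiff,
    Nat.sub_add_cancel (card_le_univ P)]

theorem two_mul_pow_self_le {l : ℕ} (hl : 0 < l) : 2 * l ^ l ≤ (l + 1) ^ l := by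
  have h := pow_add_mul_le_add_pow (a := l) (b := 1) (Nat.zero_le _) (Nat.zero_le _) l
  rwa [mul_one, Nat.cast_id, ← pow_succ', Nat.sub_add_cancel hl, ← two_mul] at h

-- `(l / (l + 1)) ^ D ≤ 2 ^ (-⌊D / l⌋)`, cleared of denominators.
theorem two_pow_div_mul_pow_le {l : ℕ} (hl : 0 < l) (D : ℕ) :
    2 ^ (D / l) * l ^ D ≤ (l + 1) ^ D := by
  rw [← Nat.div_add_mod D l, Nat.mul_add_div hl, Nat.mod_div_self, add_zero, pow_add, pow_add,
    pow_mul, pow_mul, ← mul_assoc, ← mul_pow]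
  exact Nat.mul_le_mul (Nat.pow_le_pow_left (two_mul_pow_self_le hl) _)
    (Nat.pow_le_pow_left (Nat.le_succ l) _)

theorem forall_mem_image_offDiag_iff {V : Type*} [DecidableEq V] {S : Finset V}
    {P : Sym2 V → Prop} :
    (∀ e ∈ S.offDiag.image Sym2.mk.uncurry, P e) ↔ (S : Set V).Pairwise fun u v => P s(u, v) := by
  simp only [forall_mem_image, mem_offDiag, Function.uncurry, Set.Pairwise, mem_coe, and_imp,
    Prod.forall]
  exact ⟨fun h u hu v hv => h u v hu hv, fun h u v hu hv => h hu hv⟩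

namespace SimpleGraph

section Deletion

variable {V : Type*} (G : SimpleGraph V)

def withoutTriangleEdges : SimpleGraph V where
  Adj u v := G.Adj u v ∧ ∀ w, ¬(G.Adj u w ∧ G.Adj v w)
  symm := ⟨fun _ _ h => ⟨h.1.symm, fun w hw => h.2 w hw.symm⟩⟩
  loopless := ⟨fun v h => G.loopless.irrefl v h.1⟩

theorem cliqueFree_three_withoutTriangleEdges : G.withoutTriangleEdges.CliqueFree 3 := by
  classical
  intro S hS
  obtain ⟨a, b, c, hab, hac, hbc, rfl⟩ := is3Clique_iff.1 hS
  exact hab.2 c ⟨hac.1, hbc.1⟩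

variable [Fintype V] [DecidableEq V] [DecidableRel G.Adj]

theorem card_le_of_isIndepSet_withoutTriangleEdges {a : ℕ}
    (hG : ∀ S : Finset V, G.IsIndepSet ↑S → #S ≤ a) {S : Finset V}
    (hS : G.withoutTriangleEdges.IsIndepSet ↑S) : #S ≤ a + 3 * #(G.cliqueFinset 3) := by
  set X := (G.cliqueFinset 3).biUnion id
  have hX : #X ≤ 3 * #(G.cliqueFinset 3) := by
    refine card_biUnion_le.trans ?_
    rw [mul_comm, ← smul_eq_mul, ← sum_const]
    exact sum_le_sum fun T hT => ((mem_cliqueFinset_iff.1 hT).card_eq).le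
  have hindep : G.IsIndepSet ↑(S \ X) := by
    intro u hu v hv huv hadj
    simp only [coe_sdiff, Set.mem_sdiff, mem_coe] at hu hv
    obtain ⟨w, huw, hvw⟩ : ∃ w, G.Adj u w ∧ G.Adj v w :=
      not_forall_not.1 fun h => hS hu.1 hv.1 huv ⟨hadj, h⟩
    refine hu.2 (mem_biUnion.2 ⟨{u, v, w}, mem_cliqueFinset_iff.2 ?_, by simp⟩)
    exact is3Clique_triple_iff.2 ⟨hadj, huw, hvw⟩
  calc #S ≤ #(S \ X) + #X := card_le_card_sdiff_add_card
    _ ≤ a + 3 * #(G.cliqueFinset 3) := add_le_add (hG _ hindep) hX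

end Deletion

section RandomGraph

variable {V : Type*} [DecidableEq V]

theorem isClique_fromEdgeSet_iff {s : Set (Sym2 V)} {S : Finset V} :
    (fromEdgeSet s).IsClique ↑S ↔ ∀ e ∈ S.offDiag.image Sym2.mk.uncurry, e ∈ s := by
  rw [forall_mem_image_offDiag_iff, IsClique]
  exact ⟨fun h u hu v hv huv => (h hu hv huv).1, fun h u hu v hv huv => ⟨h hu hv huv, huv⟩⟩

theorem isIndepSet_fromEdgeSet_iff {s : Set (Sym2 V)} {S : Finset V} :
    (fromEdgeSet s).IsIndepSet ↑S ↔ ∀ e ∈ S.offDiag.image Sym2.mk.uncurry, e ∉ s := by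
  rw [forall_mem_image_offDiag_iff, IsIndepSet]
  exact ⟨fun h u hu v hv huv hs => h hu hv huv ⟨hs, huv⟩,
    fun h u hu v hv huv hs => h hu hv huv hs.1⟩

variable [Fintype V]

open Classical in
theorem card_filter_exists_isIndepSet_mul_pow_le (l t : ℕ) :
    #{ω : Sym2 V → Fin (l + 1) | ∃ S : Finset V, #S = t ∧
        (fromEdgeSet (ω ⁻¹' {0})).IsIndepSet ↑S} * (l + 1) ^ t.choose 2 ≤
      (Fintype.card V).choose t * l ^ t.choose 2 * (l + 1) ^ Fintype.card (Sym2 V) := by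
  set event : Finset V → Finset (Sym2 V → Fin (l + 1)) := fun S =>
    {ω | ∀ e ∈ S.offDiag.image Sym2.mk.uncurry, ω e ∈ univ.erase 0}
  have hsub : ({ω : Sym2 V → Fin (l + 1) | ∃ S : Finset V, #S = t ∧
      (fromEdgeSet (ω ⁻¹' {0})).IsIndepSet ↑S} : Finset _) ⊆
        (powersetCard t univ).biUnion event := by
    intro ω hω
    obtain ⟨S, hS, hindep⟩ := (mem_filter.1 hω).2
    refine mem_biUnion.2 ⟨S, mem_powersetCard.2 ⟨subset_univ S, hS⟩,
      mem_filter.2 ⟨mem_univ ω, ?_⟩⟩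
    simpa using isIndepSet_fromEdgeSet_iff.1 hindep
  have hevent : ∀ S ∈ powersetCard t (univ : Finset V), #(event S) * (l + 1) ^ t.choose 2 =
      l ^ t.choose 2 * (l + 1) ^ Fintype.card (Sym2 V) := by
    intro S hS
    have := card_filter_forall_mem_mul_pow (S.offDiag.image Sym2.mk.uncurry)
      (univ.erase (0 : Fin (l + 1)))
    rwa [Sym2.card_image_offDiag, (mem_powersetCard.1 hS).2, card_erase_of_mem (mem_univ _),
      card_univ, Fintype.card_fin, Nat.add_sub_cancel] at this
  calc _ ≤ (∑ S ∈ powersetCard t univ, #(event S)) * (l + 1) ^ t.choose 2 :=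
        Nat.mul_le_mul_right _ ((card_le_card hsub).trans card_biUnion_le)
    _ = _ := by
        rw [sum_mul, sum_congr rfl hevent, sum_const, card_powersetCard, card_univ, smul_eq_mul,
          mul_assoc]

open Classical in
theorem sum_card_cliqueFinset_three_mul_pow (l : ℕ) :
    (∑ ω : Sym2 V → Fin (l + 1), #((fromEdgeSet (ω ⁻¹' {0})).cliqueFinset 3)) * (l + 1) ^ 3 =
      (Fintype.card V).choose 3 * (l + 1) ^ Fintype.card (Sym2 V) := by
  set isTriangle := fun (ω : Sym2 V → Fin (l + 1)) (S : Finset V) =>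
    (fromEdgeSet (ω ⁻¹' {0})).IsClique (S : Set V)
  have hclique : ∀ ω, (fromEdgeSet (ω ⁻¹' {0})).cliqueFinset 3 =
      (powersetCard 3 univ).bipartiteAbove isTriangle ω := by
    intro ω
    ext S
    simp [isTriangle, bipartiteAbove, mem_cliqueFinset_iff, isNClique_iff, and_comm]
  have hevent : ∀ S ∈ powersetCard 3 (univ : Finset V),
      #(univ.bipartiteBelow isTriangle S) * (l + 1) ^ 3 = (l + 1) ^ Fintype.card (Sym2 V) := by
    intro S hS
    have := card_filter_forall_mem_mul_pow (S.offDiag.image Sym2.mk.uncurry) {(0 : Fin (l + 1))}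
    rw [Sym2.card_image_offDiag, (mem_powersetCard.1 hS).2, card_singleton, one_pow, one_mul,
      Fintype.card_fin] at this
    simpa [isTriangle, bipartiteBelow, isClique_fromEdgeSet_iff] using this
  simp_rw [hclique]
  rw [sum_card_bipartiteAbove_eq_sum_card_bipartiteBelow, sum_mul, sum_congr rfl hevent,
    sum_const, card_powersetCard, card_univ, smul_eq_mul]

open Classical in
theorem four_mul_card_filter_exists_isIndepSet_le {l t : ℕ} (hl : 0 < l)
    (hindep : l * (Fintype.card V + 2) ≤ t.choose 2) :
    4 * #{ω : Sym2 V → Fin (l + 1) | ∃ S : Finset V, #S = t ∧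
        (fromEdgeSet (ω ⁻¹' {0})).IsIndepSet ↑S} ≤ (l + 1) ^ Fintype.card (Sym2 V) := by
  have hchoose : 4 * (Fintype.card V).choose t ≤ 2 ^ (t.choose 2 / l) := by
    have hm : 2 ^ (Fintype.card V + 2) ≤ 2 ^ (t.choose 2 / l) :=
      Nat.pow_le_pow_right two_pos ((Nat.le_div_iff_mul_le hl).2 (by linarith))
    have := Nat.choose_le_two_pow (Fintype.card V) t
    rw [pow_add] at hm
    omega
  refine Nat.le_of_mul_le_mul_right ?_ (pow_pos (Nat.succ_pos l) (t.choose 2))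
  calc _ ≤ 4 * (Fintype.card V).choose t * l ^ t.choose 2 * (l + 1) ^ Fintype.card (Sym2 V) := by
        simpa only [mul_assoc] using
          Nat.mul_le_mul_left 4 (card_filter_exists_isIndepSet_mul_pow_le l t)
    _ ≤ 2 ^ (t.choose 2 / l) * l ^ t.choose 2 * (l + 1) ^ Fintype.card (Sym2 V) := by gcongr
    _ ≤ (l + 1) ^ t.choose 2 * (l + 1) ^ Fintype.card (Sym2 V) := by
        gcongr; exact two_pow_div_mul_pow_le hl _
    _ = (l + 1) ^ Fintype.card (Sym2 V) * (l + 1) ^ t.choose 2 := mul_comm _ _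

open Classical in
theorem four_mul_card_filter_le_card_cliqueFinset_le {l t : ℕ} (ht : 0 < t)
    (htri : 4 * Fintype.card V ^ 3 ≤ t * (l + 1) ^ 3) :
    4 * #{ω : Sym2 V → Fin (l + 1) | t ≤ #((fromEdgeSet (ω ⁻¹' {0})).cliqueFinset 3)} ≤
      (l + 1) ^ Fintype.card (Sym2 V) := by
  set bad : Finset (Sym2 V → Fin (l + 1)) :=
    {ω | t ≤ #((fromEdgeSet (ω ⁻¹' {0})).cliqueFinset 3)}
  have hmarkov : #bad * t ≤ ∑ ω : Sym2 V → Fin (l + 1),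
      #((fromEdgeSet (ω ⁻¹' {0})).cliqueFinset 3) := by
    rw [← smul_eq_mul]
    exact (card_nsmul_le_sum _ _ t fun ω hω => (mem_filter.1 hω).2).trans
      (sum_le_sum_of_subset (subset_univ _))
  have hchoose := Nat.choose_le_pow (Fintype.card V) 3
  refine Nat.le_of_mul_le_mul_right ?_ (Nat.mul_pos ht (pow_pos (Nat.succ_pos l) 3))
  calc 4 * #bad * (t * (l + 1) ^ 3) = 4 * (#bad * t) * (l + 1) ^ 3 := by ring
    _ ≤ 4 * (∑ ω : Sym2 V → Fin (l + 1),
          #((fromEdgeSet (ω ⁻¹' {0})).cliqueFinset 3)) * (l + 1) ^ 3 := by gcongr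
    _ = 4 * (Fintype.card V).choose 3 * (l + 1) ^ Fintype.card (Sym2 V) := by
        rw [mul_assoc, sum_card_cliqueFinset_three_mul_pow, mul_assoc]
    _ ≤ t * (l + 1) ^ 3 * (l + 1) ^ Fintype.card (Sym2 V) :=
        Nat.mul_le_mul_right _ (by omega)
    _ = (l + 1) ^ Fintype.card (Sym2 V) * (t * (l + 1) ^ 3) := mul_comm _ _

end RandomGraph

theorem exists_cliqueFree_three_isIndepSet_card_lt {V : Type*} [Fintype V] {l t : ℕ} (hl : 0 < l)
    (hindep : l * (Fintype.card V + 2) ≤ t.choose 2)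
    (htri : 4 * Fintype.card V ^ 3 ≤ t * (l + 1) ^ 3) :
    ∃ H : SimpleGraph V, H.CliqueFree 3 ∧ ∀ S : Finset V, H.IsIndepSet ↑S → #S < 4 * t := by
  classical
  have ht : 0 < t := Nat.pos_of_ne_zero fun h => by
    simp [h] at hindep
    omega
  set bad₁ : Finset (Sym2 V → Fin (l + 1)) :=
    {ω | ∃ S : Finset V, #S = t ∧ (fromEdgeSet (ω ⁻¹' {0})).IsIndepSet ↑S}
  set bad₂ : Finset (Sym2 V → Fin (l + 1)) :=
    {ω | t ≤ #((fromEdgeSet (ω ⁻¹' {0})).cliqueFinset 3)}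
  have hbad₁ : 4 * #bad₁ ≤ (l + 1) ^ Fintype.card (Sym2 V) :=
    four_mul_card_filter_exists_isIndepSet_le hl hindep
  have hbad₂ : 4 * #bad₂ ≤ (l + 1) ^ Fintype.card (Sym2 V) :=
    four_mul_card_filter_le_card_cliqueFinset_le ht htri
  obtain ⟨ω, -, hω⟩ := exists_mem_notMem_of_card_lt_card (s := bad₁ ∪ bad₂) (t := univ) (by
    have := card_union_le bad₁ bad₂
    have : 0 < (l + 1) ^ Fintype.card (Sym2 V) := by positivity
    rw [card_univ, Fintype.card_fun, Fintype.card_fin]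
    omega)
  simp only [bad₁, bad₂, mem_union, not_or, mem_filter, mem_univ, true_and, not_exists, not_and,
    not_le] at hω
  set G := fromEdgeSet (ω ⁻¹' {0})
  have hα : ∀ S : Finset V, G.IsIndepSet ↑S → #S ≤ t - 1 := by
    intro S hS
    by_contra! h
    obtain ⟨T, hTS, hT⟩ := exists_subset_card_eq (show t ≤ #S by omega)
    exact hω.1 T hT (hS.mono (coe_subset.2 hTS))
  refine ⟨G.withoutTriangleEdges, cliqueFree_three_withoutTriangleEdges G, fun S hS => ?_⟩
  have htriangles : #(G.cliqueFinset 3) < t := by convert hω.2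
  have := card_le_of_isIndepSet_withoutTriangleEdges G hα hS
  omega

theorem exists_deletion_parameters {q m : ℕ} (hq : 0 < q) (hm : 2 ^ 14 * (4 * q) ^ 7 ≤ m) :
    ∃ l t : ℕ, 0 < l ∧ l * (m + 2) ≤ t.choose 2 ∧ 4 * m ^ 3 ≤ t * (l + 1) ^ 3 ∧
      4 * t * q ≤ m := by
  set a := 4 * q
  set t := m / a
  set l := t / (8 * a)
  have ha : 0 < a := by omega
  have hta : t * a ≤ m := Nat.div_mul_le_self m a
  have hmt : m < (t + 1) * a := Nat.lt_mul_of_div_lt (Nat.lt_succ_self t) ha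
  have hlt : l * (8 * a) ≤ t := Nat.div_mul_le_self t (8 * a)
  have htl : t < (l + 1) * (8 * a) := Nat.lt_mul_of_div_lt (Nat.lt_succ_self l) (by omega)
  have ht : 2 ^ 14 * a ^ 6 ≤ t :=
    (Nat.le_div_iff_mul_le ha).2 (by rw [mul_assoc, ← pow_succ]; exact hm)
  have ha6 : a ≤ a ^ 6 := Nat.le_self_pow (by norm_num) a
  have hl : 0 < l := Nat.div_pos (by omega) (by omega)
  have htq : 4 * t * q ≤ m := le_of_eq_of_le (by ring) hta
  clear_value a t l
  refine ⟨l, t, hl, ?_, ?_, htq⟩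
  · have hm2 : m + 2 ≤ a * (t + 2) := by nlinarith
    have h : 8 * (l * (m + 2)) ≤ t * (t + 2) :=
      calc 8 * (l * (m + 2)) ≤ 8 * (l * (a * (t + 2))) := by gcongr
        _ = l * (8 * a) * (t + 2) := by ring
        _ ≤ t * (t + 2) := by gcongr
    rw [Nat.choose_two_right, Nat.le_div_iff_mul_le two_pos]
    obtain ⟨s, rfl⟩ : ∃ s, t = s + 2 := ⟨t - 2, by omega⟩
    rw [Nat.add_sub_assoc one_le_two]
    nlinarith
  · have hm : m ≤ 2 * a * t := by nlinarith
    refine Nat.le_of_mul_le_mul_right ?_ (pow_pos (show 0 < 8 * a by omega) 3)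
    calc 4 * m ^ 3 * (8 * a) ^ 3 ≤ 4 * (2 * a * t) ^ 3 * (8 * a) ^ 3 := by gcongr
      _ = 2 ^ 14 * a ^ 6 * t ^ 3 := by ring
      _ ≤ t * t ^ 3 := by gcongr
      _ ≤ t * ((l + 1) * (8 * a)) ^ 3 := by gcongr
      _ = t * (l + 1) ^ 3 * (8 * a) ^ 3 := by ring

theorem exists_cliqueFree_three_isIndepSet_card_mul_le {q : ℕ} (hq : 0 < q) :
    ∃ M : ℕ, ∀ (V : Type*) [Fintype V], M ≤ Fintype.card V → ∃ H : SimpleGraph V,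
      H.CliqueFree 3 ∧ ∀ S : Finset V, H.IsIndepSet ↑S → #S * q ≤ Fintype.card V := by
  refine ⟨2 ^ 14 * (4 * q) ^ 7, fun V _ hV => ?_⟩
  obtain ⟨l, t, hl, hindep, htri, htq⟩ := exists_deletion_parameters hq hV
  obtain ⟨H, hH, hα⟩ := exists_cliqueFree_three_isIndepSet_card_lt hl hindep htri
  refine ⟨H, hH, fun S hS => le_trans ?_ htq⟩
  exact Nat.mul_le_mul_right q (hα S hS).le

section Cut

variable {V : Type*}

def addCut (H : SimpleGraph V) (A : Finset V) : SimpleGraph V where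
  Adj u v := H.Adj u v ∨ (u ∈ A ↔ v ∉ A)
  symm := ⟨fun u v h => h.imp (fun h => h.symm) fun h => by tauto⟩
  loopless := ⟨fun v h => h.elim (H.loopless.irrefl v) (by tauto)⟩

theorem IsIndepSet.of_addCut {H : SimpleGraph V} {A : Finset V} {S : Set V}
    (hS : (H.addCut A).IsIndepSet S) : H.IsIndepSet S :=
  hS.mono' fun _ _ h hadj => h (Or.inl hadj)

def cutColouring [Fintype V] [DecidableEq V] (A : Finset V) (f : A × ↥Aᶜ → Fin 2) :
    Sym2 V → Fin 2 :=
  Sym2.lift ⟨fun u v =>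
    if hu : u ∈ A then
      if hv : v ∈ A then 0 else f (⟨u, hu⟩, ⟨v, mem_compl.2 hv⟩)
    else
      if hv : v ∈ A then f (⟨v, hv⟩, ⟨u, mem_compl.2 hu⟩) else 1,
    fun u v => by dsimp only; split_ifs <;> rfl⟩

theorem cutColouring_of_mem_iff [Fintype V] [DecidableEq V] {A : Finset V}
    (f : A × ↥Aᶜ → Fin 2) {u v : V} (huv : u ∈ A ↔ v ∈ A) :
    cutColouring A f s(u, v) = if u ∈ A then 0 else 1 := by
  by_cases hu : u ∈ A
  · simp [cutColouring, hu, huv.mp hu]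
  · simp [cutColouring, hu, mt huv.mpr hu]

theorem cutColouring_of_mem_of_notMem [Fintype V] [DecidableEq V] {A : Finset V}
    (f : A × ↥Aᶜ → Fin 2) {u v : V} (hu : u ∈ A) (hv : v ∉ A) :
    cutColouring A f s(u, v) = f (⟨u, hu⟩, ⟨v, mem_compl.2 hv⟩) := by
  simp [cutColouring, hu, hv]

end Cut

end SimpleGraph

open SimpleGraph

theorem not_hasMonoClique_four_addCut {n : ℕ} {H : SimpleGraph (Fin n)} (hH : H.CliqueFree 3)
    {A : Finset (Fin n)} {φ : (H.addCut A).edgeSet → Fin 2}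
    (hφ : ∀ u v (h : (H.addCut A).Adj u v), (u ∈ A ↔ v ∈ A) →
      φ ⟨s(u, v), h⟩ = if u ∈ A then 0 else 1) :
    ¬HasMonoClique (H.addCut A) φ 4 := by
  rintro ⟨S, c, hS, hc⟩
  have hrest : #(S.filter fun v => ¬(v ∈ A ↔ c = 0)) ≤ 1 := by
    refine card_le_one.2 fun u hu v hv => by_contra fun huv => ?_
    simp only [mem_filter] at hu hv
    obtain ⟨h, hcol⟩ := hc u hu.1 v hv.1 huv
    rw [hφ u v h (by fin_cases c <;> simp_all)] at hcol
    fin_cases c <;> by_cases u ∈ A <;> simp_all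
  have hT : 3 ≤ #(S.filter fun v => (v ∈ A ↔ c = 0)) := by
    have := card_filter_add_card_filter_not (s := S) fun v => (v ∈ A ↔ c = 0)
    omega
  obtain ⟨T, hTS, hT⟩ := exists_subset_card_eq hT
  refine hH T ⟨fun u hu v hv huv => ?_, hT⟩
  have hu' := mem_filter.1 (hTS hu)
  have hv' := mem_filter.1 (hTS hv)
  exact (hc u hu'.1 v hv'.1 huv).1.resolve_right (by tauto)

theorem two_pow_card_mul_card_compl_le_numColorings {n : ℕ} {H : SimpleGraph (Fin n)}
    (hH : H.CliqueFree 3) (A : Finset (Fin n)) :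
    2 ^ (#A * #Aᶜ) ≤ numColorings (H.addCut A) 2 4 := by
  let Φ : (A × ↥Aᶜ → Fin 2) →
      {φ : (H.addCut A).edgeSet → Fin 2 // ¬HasMonoClique (H.addCut A) φ 4} :=
    fun f => ⟨fun e => cutColouring A f e.1,
      not_hasMonoClique_four_addCut hH fun _ _ _ huv => cutColouring_of_mem_iff f huv⟩
  have hΦ : Function.Injective Φ := by
    intro f g hfg
    funext ⟨⟨u, hu⟩, ⟨v, hv⟩⟩
    have hv' := mem_compl.1 hv
    have := congrFun (congrArg Subtype.val hfg) ⟨s(u, v), Or.inr (iff_of_true hu hv')⟩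
    simpa [Φ, cutColouring_of_mem_of_notMem _ hu hv'] using this
  have := Nat.card_le_card_of_injective Φ hΦ
  rwa [Nat.card_eq_fintype_card, Fintype.card_fun, Fintype.card_prod, Fintype.card_coe,
    Fintype.card_coe, Fintype.card_fin] at this

theorem sq_div_four_eq (n : ℕ) : n ^ 2 / 4 = n / 2 * (n - n / 2) := by
  obtain ⟨k, rfl | rfl⟩ := Nat.even_or_odd' n
  · rw [show (2 * k) ^ 2 = 4 * (k * k) by ring, show 2 * k / 2 = k by omega,
      show 2 * k - k = k by omega]
    omega
  · rw [show (2 * k + 1) ^ 2 = 4 * (k * k + k) + 1 by ring, show (2 * k + 1) / 2 = k by omega,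
      show 2 * k + 1 - k = k + 1 by omega, mul_add_one]
    omega

theorem statement_4 (γ : ℝ) (hγ : 0 < γ) :
    ∃ n0 : ℕ, ∀ n : ℕ, n0 ≤ n → ∃ G : SimpleGraph (Fin n),
      indepLE G (γ * n) ∧ 2 ^ (n ^ 2 / 4) ≤ numColorings G 2 4 := by
  obtain ⟨q, hγq⟩ := exists_nat_gt γ⁻¹
  have hq : 0 < q := by exact_mod_cast (inv_pos.2 hγ).trans hγq
  obtain ⟨M, hM⟩ := exists_cliqueFree_three_isIndepSet_card_mul_le hq
  refine ⟨M, fun n hn => ?_⟩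
  obtain ⟨H, hH, hα⟩ := hM (Fin n) (by simpa using hn)
  obtain ⟨A, -, hA⟩ := exists_subset_card_eq (show n / 2 ≤ #(univ : Finset (Fin n)) by simp; omega)
  refine ⟨H.addCut A, fun S hS => ?_, ?_⟩
  · have hSq : (#S : ℝ) * q ≤ n := by
      exact_mod_cast (hα S (IsIndepSet.of_addCut fun _ hu _ hv huv => hS _ hu _ hv huv)).trans
        (by simp)
    have : 1 < γ * q := by rw [inv_lt_iff_one_lt_mul₀ hγ] at hγq; linarith
    nlinarith
  · calc 2 ^ (n ^ 2 / 4) = 2 ^ (#A * #Aᶜ) := by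
          rw [card_compl, hA, Fintype.card_fin, sq_div_four_eq]
      _ ≤ _ := two_pow_card_mul_card_compl_le_numColorings hH A
end

section
/- For every ε > 0 and every integer k ≥ 3 there exists n_0 such that every weighted graph G on n ≥ n_0 vertices that contains no weighted complete subgraph of size k satisfies e(G) ≤ (b_k + ε)·n², where b_k = (k−3)/(2(k−1)) if k is odd and b_k = (3k−10)/(2(3k−4)) if k is even. -/
open Finset

/-- A weighted complete subgraph `(X, Y)` of size `k`. -/
def HasWeightedClique {n : ℕ} (w : Fin n → Fin n → ℝ) (k : ℕ) : Prop :=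
  ∃ X Y : Finset (Fin n), X ⊆ Y ∧ X.card + Y.card = k ∧
    (∀ u ∈ X, ∀ v ∈ X, u ≠ v → w u v = 1) ∧
    (∀ u ∈ Y, ∀ v ∈ Y, u ≠ v → 1 / 2 ≤ w u v)

/-- `T(G)`: sum over unordered triples of distinct vertices of the product of the three
pair weights (`w` is symmetric with zero diagonal, so the ordered sum divided by 6). -/
noncomputable def weightT {n : ℕ} (w : Fin n → Fin n → ℝ) : ℝ :=
  (1 / 6) * ∑ u : Fin n, ∑ v : Fin n, ∑ x : Fin n, w u v * w v x * w u x

/-- `e(G)`: sum of the weights over unordered pairs of distinct vertices. -/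
noncomputable def weightE {n : ℕ} (w : Fin n → Fin n → ℝ) : ℝ :=
  (1 / 2) * ∑ u : Fin n, ∑ v : Fin n, w u v

/-!
Write `λ(p) = ∑ᵤ ∑ᵥ w u v · p u · p v` for the Lagrangian of the weighted graph on the standard
simplex, so that `e(G) = n² λ(1/n, …, 1/n) / 2`; it suffices to show `λ ≤ 2 b_k` on the simplex.
Take a maximiser `q` of `λ` with smallest support `S`.
The first-order conditions make `(W q)ᵢ = λ(q)` for every `i ∈ S`, and a pair of weight `0` in `S`
could be merged into one vertex without changing `λ`, so all pairs in `S` have weight `1/2` or `1`.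
Comparing `(W q)ᵢ = λ(q)` with `∑ q = 1` shows that the half-weight neighbourhood of `i` has mass
`δ - 2 qᵢ`, where `δ = 2 - 2 λ(q)`. A greedy argument in the graph of half-weight pairs then finds
a set `I ⊆ S` whose pairs all have weight `1`, with `|I| ≥ 3/δ - |S|/2`. Since `(I, S)` and
`(I, I)` are weighted complete subgraphs, `|I| + |S| ≤ k - 1` and `2|I| ≤ k - 1`, hence
`δ (k - 1 + ⌊(k - 1)/2⌋) ≥ 6`, which is `λ(q) ≤ 2 b_k`.
-/

theorem three_mul_sub_half_add_le_one {x A : ℝ} {d : ℕ} (hx : 0 ≤ x)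
    (hA_deg : A ≤ 1 - 2 * x) (hA_max : A ≤ d * x) :
    3 * x - 1 / 2 + (3 * A - d / 2) ≤ 1 := by
  rcases lt_or_ge d 3 with hd | hd
  · interval_cases d
    · push_cast at hA_max; linarith
    · rcases le_or_gt x (1 / 3) with h | h <;> (push_cast at hA_max ⊢; linarith)
    · rcases le_or_gt x (1 / 6) with h | h <;> (push_cast at hA_max ⊢; linarith)
  · have : (3 : ℝ) ≤ d := by exact_mod_cast hd
    linarith

namespace SimpleGraph

variable {V : Type*} [DecidableEq V] (G : SimpleGraph V) [DecidableRel G.Adj]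

theorem exists_isIndepSet_sum_le_card (S : Finset V) (u : V → ℝ) (hu : ∀ i ∈ S, 0 ≤ u i)
    (hdeg : ∀ i ∈ S, ∑ j ∈ S with G.Adj i j, u j ≤ 1 - 2 * u i) :
    ∃ I ⊆ S, G.IsIndepSet (I : Set V) ∧ ∑ i ∈ S, (3 * u i - 1 / 2) ≤ I.card := by
  induction S using Finset.strongInduction with
  | H S ih =>
  rcases S.eq_empty_or_nonempty with rfl | hne
  · exact ⟨∅, subset_rfl, by simp, by simp⟩
  -- Greedy step: keep a vertex `v` of maximal weight and delete its closed neighbourhood,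
  -- which contributes at most `1` to the left-hand side.
  obtain ⟨v, hvS, hvmax⟩ := S.exists_max_image u hne
  set N := {j ∈ S | G.Adj v j}
  have hvN : v ∉ N := by simp [N]
  have hD : insert v N ⊆ S := insert_subset hvS (filter_subset _ _)
  obtain ⟨I, hIS, hI, hIsum⟩ := ih (S \ insert v N) (sdiff_ssubset hD (insert_nonempty _ _))
    (fun i hi => hu i (sdiff_subset hi))
    (fun i hi => (sum_le_sum_of_subset_of_nonneg (filter_subset_filter _ sdiff_subset)
      fun j hj _ => hu j (mem_filter.1 hj).1).trans (hdeg i (sdiff_subset hi)))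
  have hIv : ∀ j ∈ I, j ∉ insert v N := fun j hj => (mem_sdiff.1 (hIS hj)).2
  have hvI : v ∉ I := fun h => hIv v h (mem_insert_self _ _)
  refine ⟨insert v I, insert_subset hvS (hIS.trans sdiff_subset), ?_, ?_⟩
  · rw [coe_insert]
    refine hI.insert fun j hj _ => ?_
    have hvj : ¬G.Adj v j := fun hvj =>
      hIv j hj (mem_insert_of_mem (mem_filter.2 ⟨sdiff_subset (hIS hj), hvj⟩))
    exact ⟨hvj, fun h => hvj h.symm⟩
  · have hN : ∑ j ∈ N, u j ≤ N.card * u v := by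
      simpa using sum_le_sum fun j hj => hvmax j (mem_filter.1 hj).1
    have hclosed := three_mul_sub_half_add_le_one (hu v hvS) (hdeg v hvS) hN
    have hNsum : ∑ j ∈ N, (3 * u j - 1 / 2) = 3 * ∑ j ∈ N, u j - N.card / 2 := by
      rw [sum_sub_distrib, ← mul_sum, sum_const, nsmul_eq_mul]; ring
    rw [← sum_sdiff hD, sum_insert hvN, hNsum, card_insert_of_notMem hvI]
    push_cast
    linarith

end SimpleGraph

open Matrix

section Lagrangian

variable {ι : Type*} [Fintype ι] {A : Matrix ι ι ℝ}

def lagrangian (A : Matrix ι ι ℝ) (p : ι → ℝ) : ℝ := p ⬝ᵥ A *ᵥ p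

theorem continuous_lagrangian : Continuous (lagrangian A) := by
  unfold lagrangian; fun_prop

theorem lagrangian_add_smul (hA : A.IsSymm) (p e : ι → ℝ) (t : ℝ) :
    lagrangian A (p + t • e) =
      lagrangian A p + 2 * t * (e ⬝ᵥ A *ᵥ p) + t ^ 2 * lagrangian A e := by
  have hcomm : p ⬝ᵥ A *ᵥ e = e ⬝ᵥ A *ᵥ p := by
    conv_lhs => rw [dotProduct_mulVec, ← hA.eq, vecMul_transpose, dotProduct_comm]
  simp only [lagrangian, mulVec_add, mulVec_smul, add_dotProduct, dotProduct_add, smul_dotProduct,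
    dotProduct_smul, hcomm, smul_eq_mul]
  ring

variable [DecidableEq ι]

theorem single_sub_single_dotProduct (i j : ι) (v : ι → ℝ) :
    (Pi.single i 1 - Pi.single j 1) ⬝ᵥ v = v i - v j := by
  simp [sub_dotProduct]

theorem lagrangian_single_sub_single (hA : A.IsSymm) (hdiag : ∀ i, A i i = 0) (i j : ι) :
    lagrangian A (Pi.single i 1 - Pi.single j 1) = -2 * A i j := by
  simp [lagrangian, mulVec_sub, mulVec_single, hdiag, hA.apply i j]
  ring

theorem add_smul_single_sub_single_mem_stdSimplex {p : ι → ℝ} (hp : p ∈ stdSimplex ℝ ι)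
    {i j : ι} {t : ℝ} (hi : -p i ≤ t) (hj : t ≤ p j) :
    p + t • (Pi.single i 1 - Pi.single j 1) ∈ stdSimplex ℝ ι := by
  refine ⟨fun x => ?_, ?_⟩
  · simp only [Pi.add_apply, Pi.smul_apply, Pi.sub_apply, Pi.single_apply, smul_eq_mul]
    split_ifs <;> subst_vars <;> linarith [hp.1 x]
  · simp [sum_add_distrib, ← mul_sum, hp.2]

theorem mulVec_apply_eq_of_isMaxOn_lagrangian (hA : A.IsSymm) {q : ι → ℝ}
    (hq : q ∈ stdSimplex ℝ ι) (hmax : IsMaxOn (lagrangian A) (stdSimplex ℝ ι) q) {i j : ι}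
    (hi : 0 < q i) (hj : 0 < q j) : (A *ᵥ q) i = (A *ᵥ q) j := by
  set e : ι → ℝ := Pi.single i 1 - Pi.single j 1
  have hloc : IsLocalMax (fun t : ℝ => lagrangian A (q + t • e)) 0 := by
    filter_upwards [Icc_mem_nhds (neg_neg_of_pos hi) hj] with t ht
    simpa using hmax (add_smul_single_sub_single_mem_stdSimplex hq ht.1 ht.2)
  have hderiv : HasDerivAt (fun t : ℝ => lagrangian A (q + t • e)) (2 * (e ⬝ᵥ A *ᵥ q)) 0 := by
    simp_rw [lagrangian_add_smul hA]
    refine (((((hasDerivAt_id (0 : ℝ)).const_mul 2).mul_const (e ⬝ᵥ A *ᵥ q)).const_add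
      (lagrangian A q)).add ((hasDerivAt_pow 2 (0 : ℝ)).mul_const (lagrangian A e))).congr_deriv ?_
    simp
  have := hloc.hasDerivAt_eq_zero hderiv
  rw [single_sub_single_dotProduct] at this
  linarith

theorem mulVec_apply_eq_lagrangian_of_isMaxOn (hA : A.IsSymm) {q : ι → ℝ}
    (hq : q ∈ stdSimplex ℝ ι) (hmax : IsMaxOn (lagrangian A) (stdSimplex ℝ ι) q) {i : ι}
    (hi : 0 < q i) : (A *ᵥ q) i = lagrangian A q := by
  have hterm : ∀ j, q j * (A *ᵥ q) j = q j * (A *ᵥ q) i := fun j => by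
    rcases (hq.1 j).eq_or_lt with hj | hj
    · rw [← hj, zero_mul, zero_mul]
    · rw [mulVec_apply_eq_of_isMaxOn_lagrangian hA hq hmax hj hi]
  change _ = ∑ j, q j * (A *ᵥ q) j
  rw [sum_congr rfl fun j _ => hterm j, ← sum_mul, hq.2, one_mul]

theorem exists_isMaxOn_lagrangian_card_lt (hA : A.IsSymm) (hdiag : ∀ i, A i i = 0) {q : ι → ℝ}
    (hq : q ∈ stdSimplex ℝ ι) (hmax : IsMaxOn (lagrangian A) (stdSimplex ℝ ι) q) {i j : ι}
    (hi : 0 < q i) (hj : 0 < q j) (hij : i ≠ j) (hAij : A i j = 0) :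
    ∃ q' ∈ stdSimplex ℝ ι, IsMaxOn (lagrangian A) (stdSimplex ℝ ι) q' ∧
      #{x | 0 < q' x} < #{x | 0 < q x} := by
  -- Move all the mass of `j` onto `i`: the first-order term vanishes as `(A q) i = (A q) j`,
  -- the second-order one as `A i j = 0`.
  set q' := q + q j • (Pi.single i 1 - Pi.single j 1)
  have hq' : q' ∈ stdSimplex ℝ ι :=
    add_smul_single_sub_single_mem_stdSimplex hq (by linarith) le_rfl
  have hlag : lagrangian A q' = lagrangian A q := by
    rw [lagrangian_add_smul hA, single_sub_single_dotProduct, lagrangian_single_sub_single hA hdiag,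
      mulVec_apply_eq_of_isMaxOn_lagrangian hA hq hmax hi hj, hAij]
    ring
  refine ⟨q', hq', fun p hp => hlag ▸ hmax hp, card_lt_card ⟨fun x hx => ?_, fun h => ?_⟩⟩
  · simp only [mem_filter, mem_univ, true_and, q', Pi.add_apply, Pi.smul_apply, Pi.sub_apply,
      Pi.single_apply, smul_eq_mul] at hx ⊢
    split_ifs at hx <;> subst_vars <;> linarith
  · have hj' : q' j = 0 := by simp [q', hij.symm]
    have := h (mem_filter.2 ⟨mem_univ j, hj⟩)
    rw [mem_filter, hj'] at this
    exact this.2.false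

theorem exists_isMaxOn_lagrangian_balanced [Nonempty ι] (hA : A.IsSymm) (hdiag : ∀ i, A i i = 0) :
    ∃ q ∈ stdSimplex ℝ ι, IsMaxOn (lagrangian A) (stdSimplex ℝ ι) q ∧
      (∀ i, 0 < q i → (A *ᵥ q) i = lagrangian A q) ∧
      ∀ i j, 0 < q i → 0 < q j → i ≠ j → A i j ≠ 0 := by
  obtain ⟨q₀, hq₀, hmax₀⟩ := (isCompact_stdSimplex ℝ ι).exists_isMaxOn
    ⟨_, single_mem_stdSimplex ℝ (Classical.arbitrary ι)⟩ continuous_lagrangian.continuousOn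
  have hex : ∃ m, ∃ q ∈ stdSimplex ℝ ι, IsMaxOn (lagrangian A) (stdSimplex ℝ ι) q ∧
      #{x | 0 < q x} = m := ⟨_, q₀, hq₀, hmax₀, rfl⟩
  classical
  obtain ⟨q, hq, hmax, hcard⟩ := Nat.find_spec hex
  refine ⟨q, hq, hmax, fun i hi => mulVec_apply_eq_lagrangian_of_isMaxOn hA hq hmax hi,
    fun i j hi hj hij hAij => ?_⟩
  obtain ⟨q', hq', hmax', hlt⟩ := exists_isMaxOn_lagrangian_card_lt hA hdiag hq hmax hi hj hij hAij
  exact (Nat.find_min' hex ⟨q', hq', hmax', rfl⟩).not_gt (hcard ▸ hlt)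

end Lagrangian

section HalfGraph

variable {ι : Type*} {w : ι → ι → ℝ}

def halfGraph (w : ι → ι → ℝ) : SimpleGraph ι :=
  SimpleGraph.fromRel fun a b => w a b = 1 / 2

theorem halfGraph_adj (hsym : ∀ u v, w u v = w v u) (hdiag : ∀ v, w v v = 0) {a b : ι} :
    (halfGraph w).Adj a b ↔ w a b = 1 / 2 := by
  refine ⟨fun h => ?_, fun h => ⟨fun hab => ?_, .inl h⟩⟩
  · obtain ⟨-, h | h⟩ := h
    exacts [h, hsym a b ▸ h]
  · subst hab; norm_num [hdiag] at h

theorem sum_halfGraph_adj_eq [Fintype ι] [DecidableEq ι] [DecidableRel (halfGraph w).Adj]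
    (hsym : ∀ u v, w u v = w v u) (hdiag : ∀ v, w v v = 0) {q : ι → ℝ} (hq : q ∈ stdSimplex ℝ ι)
    {i : ι} (hvals : ∀ j, 0 < q j → j ≠ i → w i j = 1 / 2 ∨ w i j = 1) :
    ∑ j ∈ {j | 0 < q j} with (halfGraph w).Adj i j, q j = 2 - 2 * (of w *ᵥ q) i - 2 * q i := by
  have hterm : ∀ j, q j * (2 - 2 * w i j) =
      (if 0 < q j ∧ (halfGraph w).Adj i j then q j else 0) + if j = i then 2 * q j else 0 := by
    intro j
    rcases (hq.1 j).eq_or_lt with hj | hj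
    · simp [← hj]
    by_cases hji : j = i
    · subst hji; simp [hdiag, mul_comm]
    · rcases hvals j hj hji with h | h <;> norm_num [h, hji, hj, halfGraph_adj hsym hdiag]
  have htot : ∑ j, q j * (2 - 2 * w i j) = 2 - 2 * (of w *ᵥ q) i := by
    rw [show 2 - 2 * (of w *ᵥ q) i = 2 * ∑ j, q j - 2 * ∑ j, w i j * q j by rw [hq.2, mul_one]; rfl,
      mul_sum, mul_sum, ← sum_sub_distrib]
    exact sum_congr rfl fun j _ => by ring
  rw [← htot, sum_congr rfl fun j _ => hterm j, sum_add_distrib, ← sum_filter, filter_filter]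
  simp only [sum_ite_eq', mem_univ, if_true]
  ring

end HalfGraph

theorem hasWeightedClique_of_le_card_add_card {n k : ℕ} {w : Fin n → Fin n → ℝ}
    {X Y : Finset (Fin n)} (hXY : X ⊆ Y) (hX : ∀ u ∈ X, ∀ v ∈ X, u ≠ v → w u v = 1)
    (hY : ∀ u ∈ Y, ∀ v ∈ Y, u ≠ v → 1 / 2 ≤ w u v) (hk : k ≤ X.card + Y.card) :
    HasWeightedClique w k := by
  obtain ⟨t, ht⟩ := Nat.exists_eq_add_of_le hk
  induction t generalizing X Y with
  | zero => exact ⟨X, Y, hXY, by omega, hX, hY⟩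
  | succ t ih =>
    by_cases hYX : Y ⊆ X
    · obtain ⟨x, hx⟩ : X.Nonempty := by
        rw [← card_pos]; have := card_le_card hYX; omega
      refine ih ((erase_subset x X).trans hXY) (fun u hu v hv => hX u (mem_of_mem_erase hu) v
        (mem_of_mem_erase hv)) hY (by rw [card_erase_of_mem hx]; omega) ?_
      rw [card_erase_of_mem hx]; have := card_pos.2 ⟨x, hx⟩; omega
    · obtain ⟨y, hyY, hyX⟩ := not_subset.1 hYX
      refine ih (subset_erase.2 ⟨hXY, fun h => hyX h⟩) hX (fun u hu v hv => hY u
        (mem_of_mem_erase hu) v (mem_of_mem_erase hv)) (by rw [card_erase_of_mem hyY]; omega) ?_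
      rw [card_erase_of_mem hyY]; have := card_pos.2 ⟨y, hyY⟩; omega

theorem two_mul_bconst {k : ℕ} (hk : 3 ≤ k) :
    2 * bconst k = 1 - 3 / ((k - 1 + (k - 1) / 2 : ℕ) : ℝ) := by
  unfold bconst
  rcases Nat.even_or_odd' k with ⟨a, rfl | rfl⟩
  · have ha : (2 : ℝ) ≤ a := by exact_mod_cast (by omega : 2 ≤ a)
    rw [if_neg (Nat.not_odd_iff_even.2 (even_two_mul a)),
      show 2 * a - 1 + (2 * a - 1) / 2 = 3 * a - 2 by omega, Nat.cast_sub (by omega)]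
    push_cast
    rw [show (3 * (2 * a) - 4 : ℝ) = 2 * (3 * a - 2) by ring]
    have : (3 * a - 2 : ℝ) ≠ 0 := by linarith
    field_simp
    ring
  · have ha : (1 : ℝ) ≤ a := by exact_mod_cast (by omega : 1 ≤ a)
    rw [if_pos (odd_two_mul_add_one a), show 2 * a + 1 - 1 + (2 * a + 1 - 1) / 2 = 3 * a by omega]
    push_cast
    field_simp
    ring

theorem one_sub_half_le_two_mul_bconst {k a b : ℕ} (hk : 3 ≤ k) {δ : ℝ} (hδ : 0 < δ)
    (hab : a + b < k) (haa : a + a < k) (h : 3 / δ - b / 2 ≤ a) : 1 - δ / 2 ≤ 2 * bconst k := by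
  rw [two_mul_bconst hk]
  set m := k - 1 + (k - 1) / 2
  have hm : (2 * a + b : ℝ) ≤ m := by exact_mod_cast (by omega : 2 * a + b ≤ m)
  have hm₀ : (0 : ℝ) < m := by exact_mod_cast (by omega : 0 < m)
  have h6 : 6 ≤ δ * (2 * a + b) := by
    have := (div_le_iff₀ hδ).1 (by linarith : 3 / δ ≤ a + b / 2)
    linarith
  have : 3 / (m : ℝ) ≤ δ / 2 := by
    rw [div_le_iff₀ hm₀]
    nlinarith
  linarith

theorem lagrangian_le_two_mul_bconst_of_balanced {n k : ℕ} (hk : 3 ≤ k) {w : Fin n → Fin n → ℝ}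
    (hsym : ∀ u v, w u v = w v u) (hdiag : ∀ v, w v v = 0) (hno : ¬HasWeightedClique w k)
    {q : Fin n → ℝ} (hq : q ∈ stdSimplex ℝ (Fin n))
    (hbal : ∀ i, 0 < q i → (of w *ᵥ q) i = lagrangian (of w) q)
    (hvals : ∀ i j, 0 < q i → 0 < q j → i ≠ j → w i j = 1 / 2 ∨ w i j = 1) :
    lagrangian (of w) q ≤ 2 * bconst k := by
  classical
  set S : Finset (Fin n) := {i | 0 < q i}
  set δ := 2 - 2 * lagrangian (of w) q
  have hSsum : ∑ i ∈ S, q i = 1 := by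
    rw [sum_filter_of_ne fun i _ hi => (hq.1 i).lt_of_ne' hi, hq.2]
  have hnbhd : ∀ i ∈ S, ∑ j ∈ S with (halfGraph w).Adj i j, q j = δ - 2 * q i := fun i hi => by
    have hi : 0 < q i := (mem_filter.1 hi).2
    rw [sum_halfGraph_adj_eq hsym hdiag hq fun j hj hji => hvals i j hi hj hji.symm, hbal i hi]
  obtain ⟨i₀, hi₀⟩ : S.Nonempty := nonempty_of_sum_ne_zero (by rw [hSsum]; exact one_ne_zero)
  have hδ : 0 < δ := by
    have := sum_nonneg fun j (_ : j ∈ {j ∈ S | (halfGraph w).Adj i₀ j}) => hq.1 j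
    linarith [hnbhd i₀ hi₀, (mem_filter.1 hi₀).2]
  obtain ⟨I, hIS, hI, hIsum⟩ := (halfGraph w).exists_isIndepSet_sum_le_card S (fun i => q i / δ)
    (fun i _ => div_nonneg (hq.1 i) hδ.le) fun i hi => by
      rw [← sum_div, hnbhd i hi, sub_div, div_self hδ.ne', mul_div_assoc]
  have hS : ∀ a ∈ S, ∀ b ∈ S, a ≠ b → 1 / 2 ≤ w a b := fun a ha b hb hab => by
    rcases hvals a b (mem_filter.1 ha).2 (mem_filter.1 hb).2 hab with h | h <;> norm_num [h]
  have hI₁ : ∀ a ∈ I, ∀ b ∈ I, a ≠ b → w a b = 1 := fun a ha b hb hab =>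
    (hvals a b (mem_filter.1 (hIS ha)).2 (mem_filter.1 (hIS hb)).2 hab).resolve_left
      fun h => hI ha hb hab ((halfGraph_adj hsym hdiag).2 h)
  have hIS_lt : #I + #S < k := not_le.1 fun h => hno (hasWeightedClique_of_le_card_add_card
    hIS hI₁ hS h)
  have hII_lt : #I + #I < k := not_le.1 fun h => hno (hasWeightedClique_of_le_card_add_card
    subset_rfl hI₁ (fun a ha b hb hab => by norm_num [hI₁ a ha b hb hab]) h)
  have hsum : ∑ i ∈ S, (3 * (q i / δ) - 1 / 2) = 3 / δ - #S / 2 := by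
    rw [sum_sub_distrib, ← mul_sum, ← sum_div, hSsum, sum_const, nsmul_eq_mul]; ring
  linarith [one_sub_half_le_two_mul_bconst hk hδ hIS_lt hII_lt (hsum ▸ hIsum)]

theorem lagrangian_le_two_mul_bconst {n k : ℕ} (hk : 3 ≤ k) {w : Fin n → Fin n → ℝ}
    (hsym : ∀ u v, w u v = w v u) (hdiag : ∀ v, w v v = 0)
    (hvals : ∀ u v : Fin n, u ≠ v → w u v = 0 ∨ w u v = 1 / 2 ∨ w u v = 1)
    (hno : ¬HasWeightedClique w k) {p : Fin n → ℝ} (hp : p ∈ stdSimplex ℝ (Fin n)) :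
    lagrangian (of w) p ≤ 2 * bconst k := by
  have : Nonempty (Fin n) := by
    by_contra h
    rw [not_nonempty_iff] at h
    simp [stdSimplex_of_isEmpty_index] at hp
  obtain ⟨q, hq, hmax, hbal, hnz⟩ :=
    exists_isMaxOn_lagrangian_balanced (A := of w) (IsSymm.ext fun i j => hsym j i) hdiag
  exact (hmax hp).trans <| lagrangian_le_two_mul_bconst_of_balanced hk hsym hdiag hno hq hbal
    fun i j hi hj hij => (hvals i j hij).resolve_left (hnz i j hi hj hij)

theorem weightE_eq_lagrangian {n : ℕ} (hn : n ≠ 0) (w : Fin n → Fin n → ℝ) :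
    weightE w = n ^ 2 / 2 * lagrangian (of w) fun _ => 1 / n := by
  have : (n : ℝ) ≠ 0 := by exact_mod_cast hn
  simp only [weightE, lagrangian, dotProduct, mulVec, of_apply, mul_sum]
  field_simp

theorem uniform_mem_stdSimplex {n : ℕ} (hn : n ≠ 0) :
    (fun _ => (1 : ℝ) / n) ∈ stdSimplex ℝ (Fin n) :=
  ⟨fun _ => by positivity, by simp [hn]⟩

theorem statement_12 (ε : ℝ) (hε : 0 < ε) (k : ℕ) (hk : 3 ≤ k) :
    ∃ n0 : ℕ, ∀ n : ℕ, n0 ≤ n → ∀ w : Fin n → Fin n → ℝ,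
      (∀ u v, w u v = w v u) → (∀ v, w v v = 0) →
      (∀ u v : Fin n, u ≠ v → w u v = 0 ∨ w u v = 1 / 2 ∨ w u v = 1) →
      ¬ HasWeightedClique w k →
      weightE w ≤ (bconst k + ε) * (n : ℝ) ^ 2 := by
  refine ⟨0, fun n _ w hsym hdiag hvals hno => ?_⟩
  rcases eq_or_ne n 0 with rfl | hn
  · simp [weightE]
  calc weightE w = n ^ 2 / 2 * lagrangian (of w) fun _ => 1 / n := weightE_eq_lagrangian hn w
    _ ≤ n ^ 2 / 2 * (2 * bconst k) := by
      gcongr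
      exact lagrangian_le_two_mul_bconst hk hsym hdiag hvals hno (uniform_mem_stdSimplex hn)
    _ ≤ (bconst k + ε) * n ^ 2 := by nlinarith [sq_nonneg (n : ℝ)]
end

section
/- For every integer s ≥ 2 and every ε > 0 there exist γ > 0 and n_0 such that for every n ≥ n_0, every simple graph G on n vertices that contains no K_(s+1) and has independence number α(G) ≤ γ·n satisfies k_s(G) ≤ ε·n^s. -/
/-!
Choose `γ = ε`. If `A` spans no `K_{t+2}` and every independent subset of `A` has at most `b`
elements, then `A` spans at most `b · |A|^t` copies of `K_{t+1}`. For `t = 0` the set `A` is itself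
independent. For larger `t`, every `K_{t+1}` in `A` is a vertex `v ∈ A` together with a `K_t` in the
neighbourhood of `v` inside `A`, which spans no `K_{t+1}`, so induction bounds the count by
`|A| · b · |A|^(t-1)`.
-/

open Finset

namespace SimpleGraph

variable {V : Type*} [DecidableEq V] (G : SimpleGraph V) [DecidableRel G.Adj]

def cliqueFinsetOn (A : Finset V) (n : ℕ) : Finset (Finset V) :=
  {S ∈ A.powerset | G.IsNClique n S}

variable {G}

@[simp]
lemma mem_cliqueFinsetOn {A S : Finset V} {n : ℕ} :
    S ∈ G.cliqueFinsetOn A n ↔ S ⊆ A ∧ G.IsNClique n S := by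
  simp [cliqueFinsetOn]

lemma card_cliqueFinsetOn_one (A : Finset V) : #(G.cliqueFinsetOn A 1) = #A := by
  have : G.cliqueFinsetOn A 1 = A.map ⟨singleton, singleton_injective⟩ := by
    ext S
    simp only [mem_cliqueFinsetOn, isNClique_one, mem_map, Function.Embedding.coeFn_mk]
    constructor
    · rintro ⟨hSA, a, rfl⟩
      exact ⟨a, singleton_subset_iff.1 hSA, rfl⟩
    · rintro ⟨a, ha, rfl⟩
      exact ⟨singleton_subset_iff.2 ha, a, rfl⟩
  rw [this, card_map]

lemma card_cliqueFinsetOn_succ_le (A : Finset V) (n : ℕ) :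
    #(G.cliqueFinsetOn A (n + 1)) ≤ ∑ v ∈ A, #(G.cliqueFinsetOn {w ∈ A | G.Adj v w} n) := by
  have hcover : G.cliqueFinsetOn A (n + 1) ⊆
      A.biUnion fun v => (G.cliqueFinsetOn {w ∈ A | G.Adj v w} n).image (insert v) := by
    intro S hS
    obtain ⟨hSA, hS⟩ := mem_cliqueFinsetOn.1 hS
    obtain ⟨v, hv⟩ : S.Nonempty := by rw [← card_pos, hS.card_eq]; omega
    refine mem_biUnion.2 ⟨v, hSA hv, mem_image.2 ⟨S.erase v, ?_, insert_erase hv⟩⟩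
    refine mem_cliqueFinsetOn.2 ⟨fun w hw => ?_, hS.erase_of_mem hv⟩
    obtain ⟨hwv, hwS⟩ := mem_erase.1 hw
    exact mem_filter.2 ⟨hSA hwS, hS.isClique hv hwS hwv.symm⟩
  calc #(G.cliqueFinsetOn A (n + 1))
      ≤ #(A.biUnion fun v => (G.cliqueFinsetOn {w ∈ A | G.Adj v w} n).image (insert v)) :=
        card_le_card hcover
    _ ≤ ∑ v ∈ A, #((G.cliqueFinsetOn {w ∈ A | G.Adj v w} n).image (insert v)) :=
        card_biUnion_le
    _ ≤ ∑ v ∈ A, #(G.cliqueFinsetOn {w ∈ A | G.Adj v w} n) :=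
        sum_le_sum fun _ _ => card_image_le

theorem card_cliqueFinsetOn_le_of_isIndepSet_card_le {b : ℝ} (t : ℕ) {A : Finset V}
    (hclique : G.CliqueFreeOn A (t + 2))
    (hindep : ∀ S ⊆ A, G.IsIndepSet (S : Set V) → (#S : ℝ) ≤ b) :
    (#(G.cliqueFinsetOn A (t + 1)) : ℝ) ≤ b * (#A : ℝ) ^ t := by
  induction t generalizing A with
  | zero =>
    have hA : G.IsIndepSet (A : Set V) := (cliqueFreeOn_two G).1 hclique
    simpa [card_cliqueFinsetOn_one] using hindep A Subset.rfl hA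
  | succ t ih =>
    have hb : 0 ≤ b := by simpa using hindep ∅ (empty_subset A) (by simp)
    have hnbhd : ∀ v ∈ A,
        (#(G.cliqueFinsetOn {w ∈ A | G.Adj v w} (t + 1)) : ℝ) ≤ b * (#A : ℝ) ^ t := by
      intro v hv
      have hclique' : G.CliqueFreeOn ({w ∈ A | G.Adj v w} : Finset V) (t + 2) := by
        rw [coe_filter]; exact CliqueFreeOn.of_succ G hclique hv
      calc (#(G.cliqueFinsetOn {w ∈ A | G.Adj v w} (t + 1)) : ℝ)
          ≤ b * (#{w ∈ A | G.Adj v w} : ℝ) ^ t :=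
            ih hclique' fun S hS => hindep S (hS.trans (filter_subset _ _))
        _ ≤ b * (#A : ℝ) ^ t := by gcongr; exact filter_subset _ _
    calc (#(G.cliqueFinsetOn A (t + 2)) : ℝ)
        ≤ ∑ v ∈ A, (#(G.cliqueFinsetOn {w ∈ A | G.Adj v w} (t + 1)) : ℝ) := by
          exact_mod_cast card_cliqueFinsetOn_succ_le A (t + 1)
      _ ≤ ∑ _v ∈ A, b * (#A : ℝ) ^ t := sum_le_sum hnbhd
      _ = b * (#A : ℝ) ^ (t + 1) := by rw [sum_const, nsmul_eq_mul]; ring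

end SimpleGraph

lemma cliqueCount_eq_card_cliqueFinsetOn_univ {n : ℕ} (G : SimpleGraph (Fin n))
    [DecidableRel G.Adj] (s : ℕ) : cliqueCount G s = #(G.cliqueFinsetOn univ s) := by
  rw [cliqueCount, Nat.card_eq_fintype_card, Fintype.card_subtype]
  simp [SimpleGraph.cliqueFinsetOn]

theorem statement_18 (s : ℕ) (hs : 2 ≤ s) (ε : ℝ) (hε : 0 < ε) :
    ∃ γ : ℝ, 0 < γ ∧ ∃ n0 : ℕ, ∀ n : ℕ, n0 ≤ n → ∀ G : SimpleGraph (Fin n),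
      G.CliqueFree (s + 1) → indepLE G (γ * n) →
      (cliqueCount G s : ℝ) ≤ ε * (n : ℝ) ^ s := by
  classical
  refine ⟨ε, hε, 0, fun n _ G hG hα => ?_⟩
  obtain ⟨t, rfl⟩ : ∃ t, s = t + 1 := ⟨s - 1, by omega⟩
  have hindep : ∀ S ⊆ univ, G.IsIndepSet (S : Set (Fin n)) → (#S : ℝ) ≤ ε * n :=
    fun S _ hS => hα S fun u hu v hv huv => hS hu hv huv
  calc (cliqueCount G (t + 1) : ℝ)
      = #(G.cliqueFinsetOn univ (t + 1)) := by rw [cliqueCount_eq_card_cliqueFinsetOn_univ]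
    _ ≤ ε * n * (#(univ : Finset (Fin n)) : ℝ) ^ t :=
        G.card_cliqueFinsetOn_le_of_isIndepSet_card_le t hG.cliqueFreeOn hindep
    _ = ε * (n : ℝ) ^ (t + 1) := by rw [card_univ, Fintype.card_fin]; ring
end
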